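/- arXiv:2401.03213 — 5 statements merged into one kernel-verified Lean document; each statement's English description precedes it below -/
import Mathlib

section
/- For positive integers $i, j$ and complex numbers $m, n$ which are positive integers, the partial fraction decomposition $\frac{1}{m^i n^j} = \sum_{\mu=1}^{i+j-1} \left( \binom{\mu-1}{i-1} \frac{1}{n^{i+j-\mu}(m+n)^\mu} + \binom{\mu-1}{j-1} \frac{1}{m^{i+j-\mu}(m+n)^\mu} \right)$ holds. -/
/-!
Put `x = m / (m + n)` and `y = n / (m + n)`, so that `x + y = 1`. After multiplying by
`m ^ i * n ^ j` the identity becomes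
`1 = x ^ i * ∑_{k < j} C(i - 1 + k, k) y ^ k + y ^ j * ∑_{k < i} C(j - 1 + k, k) x ^ k`,
which says that in Bernoulli trials with success probability `x` either `i` successes come before
`j` failures or the other way round. It follows by induction on `j` from Pascal's rule.
-/

open Finset

section NegBinomSum

variable {R : Type*} [CommRing R]

/-- The truncation at degree `a` of the series
`∑ₖ (b + k).choose k * x ^ k = 1 / (1 - x) ^ (b + 1)`. -/
def negBinomSum (b a : ℕ) (x : R) : R :=
  ∑ k ∈ range (a + 1), ((b + k).choose k : R) * x ^ k

theorem negBinomSum_succ (b a : ℕ) (x : R) :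
    negBinomSum b (a + 1) x =
      negBinomSum b a x + ((b + (a + 1)).choose (a + 1) : R) * x ^ (a + 1) :=
  sum_range_succ _ _

theorem mul_negBinomSum_zero_left (a : ℕ) {x y : R} (hxy : x + y = 1) :
    y * negBinomSum 0 a x = 1 - x ^ (a + 1) := by
  simpa [negBinomSum, ← eq_sub_of_add_eq' hxy] using mul_neg_geom_sum x (a + 1)

theorem negBinomSum_eq_mul_negBinomSum_succ_add (a b : ℕ) {x y : R} (hxy : x + y = 1) :
    negBinomSum b a x =
      y * negBinomSum (b + 1) a x + ((a + b + 1).choose a : R) * x ^ (a + 1) := by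
  induction a with
  | zero =>
    simp only [negBinomSum, zero_add, range_one, sum_singleton, Nat.choose_zero_right]
    linear_combination -hxy
  | succ a ih =>
    have pascal : ((a + b + 2).choose (a + 1) : R) =
        (a + b + 1).choose a + (b + (a + 1)).choose (a + 1) := by
      rw [show a + b + 2 = a + b + 1 + 1 by ring, Nat.choose_succ_succ', Nat.cast_add,
        show b + (a + 1) = a + b + 1 by ring]
    rw [negBinomSum_succ, negBinomSum_succ, ih, show b + 1 + (a + 1) = a + b + 2 by ring,
      show a + 1 + b + 1 = a + b + 2 by ring]
    linear_combination
      (-((a + b + 2).choose (a + 1) : R) * x ^ (a + 1)) * hxy - x ^ (a + 1) * pascal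

theorem pow_mul_negBinomSum_add_pow_mul_negBinomSum (a b : ℕ) {x y : R} (hxy : x + y = 1) :
    x ^ (a + 1) * negBinomSum a b y + y ^ (b + 1) * negBinomSum b a x = 1 := by
  induction b with
  | zero =>
    rw [zero_add, pow_one, mul_negBinomSum_zero_left a hxy]
    simp [negBinomSum]
  | succ b ih =>
    have shift := negBinomSum_eq_mul_negBinomSum_succ_add a b hxy
    rw [negBinomSum_succ, ← Nat.choose_symm_add, show a + (b + 1) = a + b + 1 by ring]
    linear_combination ih - y ^ (b + 1) * shift

end NegBinomSum

section Field

variable {K : Type*} [Field K]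

theorem sum_Icc_choose_div_pow_mul_pow (a b : ℕ) {n s : K} (hn : n ≠ 0) (hs : s ≠ 0) :
    ∑ μ ∈ Icc 1 (a + b + 1), ((μ - 1).choose a : K) / (n ^ (a + b + 2 - μ) * s ^ μ) =
      negBinomSum a b (n / s) / (s ^ (a + 1) * n ^ (b + 1)) := by
  rw [← Ico_add_one_right_eq_Icc, sum_Ico_eq_sum_range,
    show a + b + 1 + 1 - 1 = a + (b + 1) by omega, sum_range_add, sum_eq_zero fun k hk => by
      rw [Nat.choose_eq_zero_of_lt (by simpa using hk), Nat.cast_zero, zero_div],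
    zero_add, negBinomSum, sum_div]
  refine sum_congr rfl fun k hk => ?_
  obtain ⟨c, rfl⟩ := Nat.exists_eq_add_of_le (Nat.le_of_lt_succ (mem_range.mp hk))
  rw [show a + (k + c) + 2 - (1 + (a + k)) = c + 1 by omega, add_tsub_cancel_left,
    Nat.choose_symm_add, div_pow]
  field_simp
  ring

theorem one_div_pow_mul_pow_eq_sum_Icc {m n : K} (hm : m ≠ 0) (hn : n ≠ 0) (hmn : m + n ≠ 0)
    {i j : ℕ} (hi : 1 ≤ i) (hj : 1 ≤ j) :
    1 / (m ^ i * n ^ j) =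
      ∑ μ ∈ Icc 1 (i + j - 1),
        ((μ - 1).choose (i - 1) / (n ^ (i + j - μ) * (m + n) ^ μ) +
          (μ - 1).choose (j - 1) / (m ^ (i + j - μ) * (m + n) ^ μ) : K) := by
  obtain ⟨a, rfl⟩ := Nat.exists_eq_add_of_le' hi
  obtain ⟨b, rfl⟩ := Nat.exists_eq_add_of_le' hj
  have hA := sum_Icc_choose_div_pow_mul_pow a b hn hmn
  have hB := sum_Icc_choose_div_pow_mul_pow b a hm hmn
  rw [add_comm b a] at hB
  have split := pow_mul_negBinomSum_add_pow_mul_negBinomSum a b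
    (x := m / (m + n)) (y := n / (m + n)) (by field_simp)
  rw [sum_add_distrib, show a + 1 + (b + 1) = a + b + 2 by ring, Nat.add_sub_cancel,
    Nat.add_sub_cancel, show a + b + 2 - 1 = a + b + 1 by omega, hA, hB]
  rw [div_pow, div_pow] at split
  generalize negBinomSum a b (n / (m + n)) = A at split ⊢
  generalize negBinomSum b a (m / (m + n)) = B at split ⊢
  field_simp at split ⊢
  exact split.symm

end Field

theorem partial_fraction_decomposition (i j : ℕ) (hi : 1 ≤ i) (hj : 1 ≤ j)
    (m n : ℂ) (hm : ∃ a : ℕ+, m = (a : ℕ)) (hn : ∃ b : ℕ+, n = (b : ℕ)) :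
    1 / (m ^ i * n ^ j) =
      ∑ μ ∈ Finset.Icc 1 (i + j - 1),
        ((Nat.choose (μ - 1) (i - 1) : ℂ) / (n ^ (i + j - μ) * (m + n) ^ μ) +
          (Nat.choose (μ - 1) (j - 1) : ℂ) / (m ^ (i + j - μ) * (m + n) ^ μ)) := by
  obtain ⟨a, rfl⟩ := hm
  obtain ⟨b, rfl⟩ := hn
  refine one_div_pow_mul_pow_eq_sum_Icc (by simp) (by simp) ?_ hi hj
  exact_mod_cast (a + b).ne_zero
end

section
/- For an integer $k \geq 2$ and complex numbers $x, y$ with $|x| < 1$, $|y| < 1$, the identity $\sum_{j=1}^{k-1} \mathrm{Li}_{k-j}(x)\,\mathrm{Li}_j(y) = \sum_{\mu=1}^{k-1} 2^{\mu-1}\left( \mathrm{Li}_{k-\mu,\mu}(x^{-1}y, x) + \mathrm{Li}_{k-\mu,\mu}(xy^{-1}, y) \right)$ holds, where for the right-hand side we assume additionally $x \neq 0$ and $y \neq 0$. -/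
open scoped BigOperators

/-- The polylogarithm `Li_k(z) = ∑_{m ≥ 1} z^m / m^k`. -/
noncomputable def Li (k : ℕ) (z : ℂ) : ℂ :=
  ∑' m : ℕ, z ^ (m + 1) / ((m + 1 : ℕ) : ℂ) ^ k

/-- The double polylogarithm `Li_{k₁,k₂}(z₁,z₂) = ∑_{0 < m₁ < m₂} z₁^{m₁} z₂^{m₂} / (m₁^{k₁} m₂^{k₂})`,
parametrized by `m₁ = p.1 + 1`, `m₂ = p.1 + p.2 + 2`. -/
noncomputable def Li₂ (k₁ k₂ : ℕ) (z₁ z₂ : ℂ) : ℂ :=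
  ∑' p : ℕ × ℕ, z₁ ^ (p.1 + 1) * z₂ ^ (p.1 + p.2 + 2) /
    (((p.1 + 1) ^ k₁ * (p.1 + p.2 + 2) ^ k₂ : ℕ) : ℂ)

/-!
Both sides are double power series `∑ x^m y^n c(m, n)` over `m, n ≥ 1`: in the `Li₂` terms,
`(x⁻¹ y)^{m₁} x^{m₂} = y^{m₁} x^{m₂ - m₁}` with `m₁` and `m₂ - m₁` independent. So it suffices to
compare coefficients. With `X = 1/m`, `Y = 1/n`, `W = 1/(m + n)`, which satisfy
`W (X + Y) = X Y`, this is the partial-fraction identity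
`∑_{j=1}^{k-1} X^{k-j} Y^j = ∑_{μ=1}^{k-1} 2^{μ-1} (X^{k-μ} + Y^{k-μ}) W^μ`.
Both sides satisfy `S_{k+1} = W (2 S_k + X^k + Y^k)`: on the right this is a shift of `μ`, on
the left it follows from `W (X + Y) = X Y`.
-/

open Finset

section
variable {R : Type*} [CommRing R] (x y w : R)

theorem sum_range_pow_mul_pow_succ_eq_left (n : ℕ) :
    ∑ i ∈ range (n + 1), x ^ (n + 1 - i) * y ^ (i + 1) =
      x * ∑ i ∈ range n, x ^ (n - i) * y ^ (i + 1) + x * y ^ (n + 1) := by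
  rw [sum_range_succ, mul_sum, Nat.add_sub_cancel_left, pow_one]
  congr 1
  refine sum_congr rfl fun i hi => ?_
  rw [Nat.sub_add_comm (mem_range.1 hi).le, pow_succ']
  ring

theorem sum_range_pow_mul_pow_succ_eq_right (n : ℕ) :
    ∑ i ∈ range (n + 1), x ^ (n + 1 - i) * y ^ (i + 1) =
      y * ∑ i ∈ range n, x ^ (n - i) * y ^ (i + 1) + x ^ (n + 1) * y := by
  rw [sum_range_succ', mul_sum]
  simp only [Nat.add_sub_add_right, pow_succ, Nat.sub_zero, zero_add, pow_zero, one_mul]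
  congr 1
  exact sum_congr rfl fun i _ => by ring

theorem sum_range_weighted_succ (n : ℕ) :
    ∑ i ∈ range (n + 1), 2 ^ i * (x ^ (n + 1 - i) + y ^ (n + 1 - i)) * w ^ (i + 1) =
      w * (2 * ∑ i ∈ range n, 2 ^ i * (x ^ (n - i) + y ^ (n - i)) * w ^ (i + 1) +
        x ^ (n + 1) + y ^ (n + 1)) := by
  rw [sum_range_succ', mul_sum, add_assoc, mul_add, mul_add, mul_sum]
  simp only [Nat.add_sub_add_right, Nat.sub_zero, pow_zero, one_mul, zero_add, pow_one]
  congr 1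
  · exact sum_congr rfl fun i _ => by ring
  · ring

variable {x y w}

theorem sum_range_pow_mul_pow_succ_eq_mul (h : w * (x + y) = x * y) (n : ℕ) :
    ∑ i ∈ range (n + 1), x ^ (n + 1 - i) * y ^ (i + 1) =
      w * (2 * ∑ i ∈ range n, x ^ (n - i) * y ^ (i + 1) + x ^ (n + 1) + y ^ (n + 1)) := by
  cases n with
  | zero => simp [← h]
  | succ n =>
    rw [sum_range_pow_mul_pow_succ_eq_left x y (n + 1)]
    have hl := sum_range_pow_mul_pow_succ_eq_left x y n
    have hr := sum_range_pow_mul_pow_succ_eq_right x y n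
    linear_combination -(∑ i ∈ range n, x ^ (n - i) * y ^ (i + 1) + x ^ (n + 1) + y ^ (n + 1)) * h
      + x * hr - w * hl - w * hr

theorem sum_range_pow_mul_pow_eq_weighted (h : w * (x + y) = x * y) (n : ℕ) :
    ∑ i ∈ range n, x ^ (n - i) * y ^ (i + 1) =
      ∑ i ∈ range n, 2 ^ i * (x ^ (n - i) + y ^ (n - i)) * w ^ (i + 1) := by
  induction n with
  | zero => simp
  | succ n ih => rw [sum_range_pow_mul_pow_succ_eq_mul h, sum_range_weighted_succ, ih]

theorem sum_Icc_pow_mul_pow_eq_weighted (h : w * (x + y) = x * y) (k : ℕ) :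
    ∑ j ∈ Icc 1 (k - 1), x ^ (k - j) * y ^ j =
      ∑ μ ∈ Icc 1 (k - 1), 2 ^ (μ - 1) * (x ^ (k - μ) + y ^ (k - μ)) * w ^ μ := by
  simp only [← Ico_add_one_right_eq_Icc, sum_Ico_eq_sum_range, Nat.add_sub_cancel, add_comm 1,
    Nat.sub_add_eq, Nat.sub_right_comm k _ 1]
  exact sum_range_pow_mul_pow_eq_weighted h (k - 1)

end

theorem sum_Icc_inv_pow_mul_pow_eq {K : Type*} [Field K] {a b : K} (ha : a ≠ 0) (hb : b ≠ 0)
    (hab : a + b ≠ 0) (k : ℕ) :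
    ∑ j ∈ Icc 1 (k - 1), (a ^ (k - j) * b ^ j)⁻¹ =
      ∑ μ ∈ Icc 1 (k - 1), 2 ^ (μ - 1) * ((b ^ (k - μ) * (a + b) ^ μ)⁻¹ +
        (a ^ (k - μ) * (a + b) ^ μ)⁻¹) := by
  have h : (a + b)⁻¹ * (a⁻¹ + b⁻¹) = a⁻¹ * b⁻¹ := by
    field_simp
    ring
  simp only [mul_inv, ← inv_pow]
  rw [sum_Icc_pow_mul_pow_eq_weighted h k]
  exact sum_congr rfl fun μ _ => by ring

theorem sum_Icc_natCast_inv_eq (m n k : ℕ) :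
    ∑ j ∈ Icc 1 (k - 1), (((m + 1) ^ (k - j) * (n + 1) ^ j : ℕ) : ℂ)⁻¹ =
      ∑ μ ∈ Icc 1 (k - 1), 2 ^ (μ - 1) * ((((n + 1) ^ (k - μ) * (m + n + 2) ^ μ : ℕ) : ℂ)⁻¹ +
        (((m + 1) ^ (k - μ) * (m + n + 2) ^ μ : ℕ) : ℂ)⁻¹) := by
  push_cast
  rw [show (m : ℂ) + n + 2 = (m + 1) + (n + 1) by ring]
  exact sum_Icc_inv_pow_mul_pow_eq (Nat.cast_add_one_ne_zero m) (Nat.cast_add_one_ne_zero n)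
    (by exact_mod_cast (m + 1 + (n + 1)).succ_ne_zero) k

theorem summable_norm_pow_succ {z : ℂ} (hz : ‖z‖ < 1) : Summable fun m : ℕ => ‖z‖ ^ (m + 1) :=
  (summable_nat_add_iff 1).2 (summable_geometric_of_lt_one (norm_nonneg z) hz)

theorem summable_pow_mul_pow_mul_natCast_inv {x y : ℂ} (hx : ‖x‖ < 1) (hy : ‖y‖ < 1)
    (D : ℕ × ℕ → ℕ) : Summable fun p : ℕ × ℕ => x ^ (p.1 + 1) * y ^ (p.2 + 1) * (D p : ℂ)⁻¹ := by
  refine .of_norm_bounded ((summable_norm_pow_succ hx).mul_of_nonneg (summable_norm_pow_succ hy)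
    (fun _ => by positivity) (fun _ => by positivity)) fun p => ?_
  rw [norm_mul, norm_mul, norm_pow, norm_pow, norm_inv, Complex.norm_natCast]
  exact mul_le_of_le_one_right (by positivity) (Nat.cast_inv_le_one _)

theorem Li_mul_Li_eq_tsum {x y : ℂ} (hx : ‖x‖ < 1) (hy : ‖y‖ < 1) (a b : ℕ) :
    Li a x * Li b y = ∑' p : ℕ × ℕ,
      x ^ (p.1 + 1) * y ^ (p.2 + 1) * (((p.1 + 1) ^ a * (p.2 + 1) ^ b : ℕ) : ℂ)⁻¹ := by
  have hs {z : ℂ} (hz : ‖z‖ < 1) (c : ℕ) :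
      Summable fun m : ℕ => ‖z ^ (m + 1) / ((m + 1 : ℕ) : ℂ) ^ c‖ := by
    refine (summable_norm_pow_succ hz).of_nonneg_of_le (fun _ => norm_nonneg _) fun m => ?_
    rw [norm_div, norm_pow, norm_pow, Complex.norm_natCast]
    exact div_le_self (by positivity) (one_le_pow₀ (by norm_cast; omega))
  rw [Li, Li, tsum_mul_tsum_of_summable_norm (hs hx a) (hs hy b)]
  refine tsum_congr fun p => ?_
  push_cast
  ring

theorem inv_mul_pow_succ_mul_pow {K : Type*} [Field K] (a b : K) (m n : ℕ) :
    (a⁻¹ * b) ^ (m + 1) * a ^ (m + n + 2) = b ^ (m + 1) * a ^ (n + 1) := by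
  rcases eq_or_ne a 0 with rfl | ha
  · simp
  · rw [mul_pow, inv_pow, show m + n + 2 = (m + 1) + (n + 1) by ring, pow_add]
    field_simp
    ring

theorem Li₂_mul_inv_eq_tsum (c d : ℕ) (x y : ℂ) :
    Li₂ c d (x * y⁻¹) y = ∑' p : ℕ × ℕ,
      x ^ (p.1 + 1) * y ^ (p.2 + 1) * (((p.1 + 1) ^ c * (p.1 + p.2 + 2) ^ d : ℕ) : ℂ)⁻¹ := by
  refine tsum_congr fun p => ?_
  rw [mul_comm x, inv_mul_pow_succ_mul_pow, div_eq_mul_inv, mul_comm (x ^ _)]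

theorem Li₂_inv_mul_eq_tsum (c d : ℕ) (x y : ℂ) :
    Li₂ c d (x⁻¹ * y) x = ∑' p : ℕ × ℕ,
      x ^ (p.1 + 1) * y ^ (p.2 + 1) * (((p.2 + 1) ^ c * (p.1 + p.2 + 2) ^ d : ℕ) : ℂ)⁻¹ := by
  conv_rhs => rw [← (Equiv.prodComm ℕ ℕ).tsum_eq]
  refine tsum_congr fun p => ?_
  simp only [Equiv.prodComm_apply, Prod.fst_swap, Prod.snd_swap]
  rw [inv_mul_pow_succ_mul_pow, div_eq_mul_inv, add_comm p.2 p.1, mul_comm (y ^ _)]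

theorem double_shuffle_weighted_general (k : ℕ) (x y : ℂ)
    (hx : ‖x‖ < 1) (hy : ‖y‖ < 1) :
    ∑ j ∈ Finset.Icc 1 (k - 1), Li (k - j) x * Li j y =
      ∑ μ ∈ Finset.Icc 1 (k - 1), (2 : ℂ) ^ (μ - 1) *
        (Li₂ (k - μ) μ (x⁻¹ * y) x + Li₂ (k - μ) μ (x * y⁻¹) y) := by
  have hs := summable_pow_mul_pow_mul_natCast_inv hx hy
  calc ∑ j ∈ Icc 1 (k - 1), Li (k - j) x * Li j y
      = ∑' p : ℕ × ℕ, ∑ j ∈ Icc 1 (k - 1),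
          x ^ (p.1 + 1) * y ^ (p.2 + 1) * (((p.1 + 1) ^ (k - j) * (p.2 + 1) ^ j : ℕ) : ℂ)⁻¹ := by
        rw [Summable.tsum_finsetSum fun j _ => hs _]
        exact sum_congr rfl fun j _ => Li_mul_Li_eq_tsum hx hy _ _
    _ = ∑' p : ℕ × ℕ, ∑ μ ∈ Icc 1 (k - 1), 2 ^ (μ - 1) *
          (x ^ (p.1 + 1) * y ^ (p.2 + 1) * (((p.2 + 1) ^ (k - μ) * (p.1 + p.2 + 2) ^ μ : ℕ) : ℂ)⁻¹ +
            x ^ (p.1 + 1) * y ^ (p.2 + 1) *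
              (((p.1 + 1) ^ (k - μ) * (p.1 + p.2 + 2) ^ μ : ℕ) : ℂ)⁻¹) := by
        refine tsum_congr fun p => ?_
        simp only [← mul_sum, ← mul_add, mul_left_comm (2 ^ _ : ℂ)]
        rw [sum_Icc_natCast_inv_eq]
    _ = _ := by
        rw [Summable.tsum_finsetSum fun μ _ => ((hs _).add (hs _)).mul_left _]
        refine sum_congr rfl fun μ _ => ?_
        rw [tsum_mul_left, (hs _).tsum_add (hs _), Li₂_inv_mul_eq_tsum, Li₂_mul_inv_eq_tsum]

theorem double_shuffle_weighted (k : ℕ) (hk : 2 ≤ k) (x y : ℂ)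
    (hx : ‖x‖ < 1) (hy : ‖y‖ < 1) (hx0 : x ≠ 0) (hy0 : y ≠ 0) :
    ∑ j ∈ Finset.Icc 1 (k - 1), Li (k - j) x * Li j y =
      ∑ μ ∈ Finset.Icc 1 (k - 1), (2 : ℂ) ^ (μ - 1) *
        (Li₂ (k - μ) μ (x⁻¹ * y) x + Li₂ (k - μ) μ (x * y⁻¹) y) :=
  double_shuffle_weighted_general k x y hx hy
end

section
/- Let $k_1, \ldots, k_r \geq 1$ and let $y$ be a fixed complex number with $|y| \leq 1$. Then for $x$ in the open unit disc, $\frac{\partial}{\partial x} \mathcal{L}_{k_1,\ldots,k_r}(x,y) = \frac{1}{x} \mathcal{L}_{k_1,\ldots,k_r - 1}(x,y)$ if $k_r > 1$, and $\frac{\partial}{\partial x} \mathcal{L}_{k_1,\ldots,k_{r-1},1}(x,y) = \frac{1-y}{(1-x)(1-xy)} \mathcal{L}_{k_1,\ldots,k_{r-1}}(x,y)$ (with $\mathcal{L}_{\emptyset}(x,y) = 1$ when $r = 1$). -/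
open scoped BigOperators

/-- The two-variable multiple polylogarithm
`𝓛_{k₁,…,k_r}(x,y) = ∑_{n₁,…,n_r ≥ 1} ∏_j x^{n_j}(1-y^{n_j}) / ∏_j (n₁+⋯+n_j)^{k_j}`. -/
noncomputable def LL {r : ℕ} (k : Fin r → ℕ) (x y : ℂ) : ℂ :=
  ∑' n : Fin r → ℕ+, (∏ j, x ^ (n j : ℕ) * (1 - y ^ (n j : ℕ))) /
    ∏ j, (((∑ ν ∈ Finset.Iic j, (n ν : ℕ)) : ℕ) : ℂ) ^ k j

/-- The multiple polylogarithm
`Li_{k₁,…,k_r}(z₁,…,z_r) = ∑_{0<m₁<⋯<m_r} z₁^{m₁}⋯z_r^{m_r} / (m₁^{k₁}⋯m_r^{k_r})`,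
with `m_j = n₁ + ⋯ + n_j`. -/
noncomputable def LiM {r : ℕ} (k : Fin r → ℕ) (z : Fin r → ℂ) : ℂ :=
  ∑' n : Fin r → ℕ+, (∏ j, z j ^ (∑ ν ∈ Finset.Iic j, (n ν : ℕ))) /
    ∏ j, (((∑ ν ∈ Finset.Iic j, (n ν : ℕ)) : ℕ) : ℂ) ^ k j

/-!
Write `weight n = n₁ + ⋯ + n_r`. The summand of `𝓛_k(t, y)` indexed by `n` is `t ^ weight n`
times a coefficient of norm at most `2 ^ r` (the denominator is a positive integer and
`‖1 - y ^ m‖ ≤ 2`), so on a disc of radius `R < 1` the summands are dominated by the summable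
`∏ⱼ 2 R ^ nⱼ`, and by Weierstrass the series can be differentiated termwise. Differentiating
produces the factor `weight n`, which is the last partial sum in the denominator and cancels one
of its powers. If `k_r > 1`, what remains is `x⁻¹` times the summand of `𝓛_{k₁,…,k_r - 1}`; if
`k_r = 1`, the last index `n_r = m` decouples and contributes the factor
`∑_{m ≥ 1} x ^ (m - 1) (1 - y ^ m) = (1 - y) / ((1 - x)(1 - x y))`.
-/

open Finset

theorem Fin.Iic_last_eq_univ (r : ℕ) : Iic (Fin.last r) = univ := Iic_top

theorem Complex.hasDerivAt_tsum_of_summable_norm {ι : Type*} {F : ι → ℂ → ℂ} {U : Set ℂ}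
    {u : ι → ℝ} {z : ℂ} (hu : Summable u) (hf : ∀ i, DifferentiableOn ℂ (F i) U)
    (hU : IsOpen U) (hF_le : ∀ i, ∀ w ∈ U, ‖F i w‖ ≤ u i) (hz : z ∈ U) :
    HasDerivAt (fun w => ∑' i, F i w) (∑' i, deriv (F i) z) z := by
  rw [(hasSum_deriv_of_summable_norm hu hf hU hF_le hz).tsum_eq]
  exact ((differentiableOn_tsum_of_summable_norm hu hf hU hF_le).differentiableAt
    (hU.mem_nhds hz)).hasDerivAt

theorem summable_pi_prod_of_nonneg {α : Type*} {g : α → ℝ} (hg : Summable g)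
    (hg0 : ∀ a, 0 ≤ g a) (s : ℕ) : Summable fun n : Fin s → α => ∏ j, g (n j) := by
  induction s with
  | zero => exact summable_of_hasFiniteSupport (Set.toFinite _)
  | succ s ih =>
    rw [← (Fin.snocEquiv fun _ => α).summable_iff]
    refine (hg.mul_of_nonneg ih hg0 fun n => prod_nonneg fun j _ => hg0 _).congr fun p => ?_
    simp [Fin.snocEquiv, Fin.prod_univ_castSucc, mul_comm]

theorem summable_pi_prod_geometric {R : ℝ} (hR0 : 0 ≤ R) (hR1 : R < 1) (C : ℝ) (hC : 0 ≤ C)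
    (s : ℕ) : Summable fun n : Fin s → ℕ+ => ∏ j, C * R ^ (n j : ℕ) := by
  have h : Summable fun m : ℕ => C * R ^ m := (summable_geometric_of_lt_one hR0 hR1).mul_left C
  exact summable_pi_prod_of_nonneg (h.comp_injective PNat.coe_injective)
    (fun _ => mul_nonneg hC (pow_nonneg hR0 _)) s

theorem norm_one_sub_pow_le_two {y : ℂ} (hy : ‖y‖ ≤ 1) (m : ℕ) : ‖1 - y ^ m‖ ≤ 2 := by
  calc ‖1 - y ^ m‖ ≤ 1 + ‖y‖ ^ m := by simpa using norm_sub_le (1 : ℂ) (y ^ m)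
    _ ≤ 2 := by linarith [pow_le_one₀ (norm_nonneg y) hy (n := m)]

theorem hasSum_pow_pred_mul_one_sub_pow {x y : ℂ} (hx : ‖x‖ < 1) (hxy : ‖x * y‖ < 1) :
    HasSum (fun m : ℕ+ => x ^ ((m : ℕ) - 1) * (1 - y ^ (m : ℕ)))
      ((1 - y) / ((1 - x) * (1 - x * y))) := by
  have h1 : 1 - x ≠ 0 := sub_ne_zero.2 (ne_of_apply_ne norm (by simpa using hx.ne'))
  have h2 : 1 - x * y ≠ 0 := sub_ne_zero.2 (ne_of_apply_ne norm (by simpa using hxy.ne'))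
  rw [hasSum_pnat_iff_hasSum_succ (f := fun m => x ^ (m - 1) * (1 - y ^ m))]
  have hsum : (1 - y) / ((1 - x) * (1 - x * y)) = (1 - x)⁻¹ - y * (1 - x * y)⁻¹ := by
    rw [← one_div, ← div_eq_mul_inv, div_sub_div _ _ h1 h2]
    ring
  rw [hsum]
  refine ((hasSum_geometric_of_norm_lt_one hx).sub
    ((hasSum_geometric_of_norm_lt_one hxy).mul_left y)).congr_fun fun n => ?_
  simp only [Nat.add_sub_cancel, pow_succ, mul_pow]
  ring

theorem summable_norm_pow_pred_mul_one_sub_pow {x y : ℂ} (hx : ‖x‖ < 1) (hxy : ‖x * y‖ < 1) :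
    Summable fun m : ℕ+ => ‖x ^ ((m : ℕ) - 1) * (1 - y ^ (m : ℕ))‖ := by
  rw [summable_pnat_iff_summable_succ (f := fun m => ‖x ^ (m - 1) * (1 - y ^ m)‖)]
  refine ((summable_geometric_of_lt_one (norm_nonneg x) hx).add
    ((summable_geometric_of_lt_one (norm_nonneg _) hxy).mul_left ‖y‖)).of_nonneg_of_le
    (fun _ => norm_nonneg _) fun n => ?_
  calc ‖x ^ (n + 1 - 1) * (1 - y ^ (n + 1))‖ = ‖x ^ n - y * (x * y) ^ n‖ := by
        congr 1; simp only [Nat.add_sub_cancel, pow_succ, mul_pow]; ring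
    _ ≤ ‖x‖ ^ n + ‖y‖ * ‖x * y‖ ^ n := by
        simpa only [norm_mul, norm_pow] using norm_sub_le (x ^ n) (y * (x * y) ^ n)

theorem tsum_eq_tsum_mul_tsum_of_snoc {α R : Type*} [NormedRing R] [CompleteSpace R] {r : ℕ}
    {g : (Fin (r + 1) → α) → R} {a : α → R} {b : (Fin r → α) → R}
    (hg : ∀ m n, g (Fin.snoc n m) = a m * b n) (ha : Summable fun m => ‖a m‖)
    (hb : Summable fun n => ‖b n‖) : ∑' n, g n = (∑' m, a m) * ∑' n, b n := by
  rw [tsum_mul_tsum_of_summable_norm ha hb, ← (Fin.snocEquiv fun _ => α).tsum_eq]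
  exact tsum_congr fun p => hg p.1 p.2

namespace LL

variable {s : ℕ}

def weight (n : Fin s → ℕ+) : ℕ := ∑ j, (n j : ℕ)

noncomputable def den (k : Fin s → ℕ) (n : Fin s → ℕ+) : ℂ :=
  ∏ j, (((∑ ν ∈ Iic j, (n ν : ℕ)) : ℕ) : ℂ) ^ k j

noncomputable def coeff (k : Fin s → ℕ) (y : ℂ) (n : Fin s → ℕ+) : ℂ :=
  (∏ j, (1 - y ^ (n j : ℕ))) / den k n

noncomputable def term (k : Fin s → ℕ) (y : ℂ) (n : Fin s → ℕ+) (t : ℂ) : ℂ :=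
  (∏ j, t ^ (n j : ℕ) * (1 - y ^ (n j : ℕ))) / den k n

noncomputable def termDeriv (k : Fin s → ℕ) (y : ℂ) (n : Fin s → ℕ+) (t : ℂ) : ℂ :=
  weight n * t ^ (weight n - 1) * coeff k y n

theorem eq_tsum_term (k : Fin s → ℕ) (x y : ℂ) : LL k x y = ∑' n, term k y n x := rfl

theorem weight_pos {r : ℕ} (n : Fin (r + 1) → ℕ+) : 0 < weight n :=
  (n 0).pos.trans_le (single_le_sum (f := fun j => (n j : ℕ)) (fun _ _ => Nat.zero_le _)
    (mem_univ _))

theorem one_le_norm_den (k : Fin s → ℕ) (n : Fin s → ℕ+) : 1 ≤ ‖den k n‖ := by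
  rw [den, norm_prod]
  refine one_le_prod fun j _ => ?_
  rw [norm_pow, Complex.norm_natCast]
  have : 0 < ∑ ν ∈ Iic j, (n ν : ℕ) := (n j).pos.trans_le
    (single_le_sum (f := fun ν => (n ν : ℕ)) (fun _ _ => Nat.zero_le _) (mem_Iic.2 le_rfl))
  exact one_le_pow₀ (by exact_mod_cast this)

theorem den_ne_zero (k : Fin s → ℕ) (n : Fin s → ℕ+) : den k n ≠ 0 :=
  norm_pos_iff.1 (one_pos.trans_le (one_le_norm_den k n))

theorem term_eq (k : Fin s → ℕ) (y : ℂ) (n : Fin s → ℕ+) (t : ℂ) :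
    term k y n t = t ^ weight n * coeff k y n := by
  rw [term, coeff, weight, prod_mul_distrib, prod_pow_eq_pow_sum, mul_div_assoc]

theorem hasDerivAt_term (k : Fin s → ℕ) (y : ℂ) (n : Fin s → ℕ+) (t : ℂ) :
    HasDerivAt (term k y n) (termDeriv k y n t) t := by
  rw [show term k y n = fun t => t ^ weight n * coeff k y n from funext (term_eq k y n)]
  exact (hasDerivAt_pow (weight n) t).mul_const (coeff k y n)

theorem norm_term_le (k : Fin s → ℕ) {y : ℂ} (hy : ‖y‖ ≤ 1) (n : Fin s → ℕ+) {t : ℂ} {R : ℝ}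
    (ht : ‖t‖ ≤ R) : ‖term k y n t‖ ≤ ∏ j, 2 * R ^ (n j : ℕ) := by
  rw [term, norm_div]
  refine (div_le_self (norm_nonneg _) (one_le_norm_den k n)).trans ?_
  rw [norm_prod]
  refine prod_le_prod (fun j _ => norm_nonneg _) fun j _ => ?_
  rw [norm_mul, norm_pow, mul_comm]
  exact mul_le_mul (norm_one_sub_pow_le_two hy _) (pow_le_pow_left₀ (norm_nonneg t) ht _)
    (by positivity) zero_le_two

theorem summable_norm_term (k : Fin s → ℕ) {y : ℂ} (hy : ‖y‖ ≤ 1) {t : ℂ} (ht : ‖t‖ < 1) :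
    Summable fun n => ‖term k y n t‖ :=
  (summable_pi_prod_geometric (norm_nonneg t) ht 2 zero_le_two s).of_nonneg_of_le
    (fun _ => norm_nonneg _) fun n => norm_term_le k hy n le_rfl

theorem hasDerivAt_tsum_termDeriv (k : Fin s → ℕ) {y : ℂ} (hy : ‖y‖ ≤ 1) {x : ℂ}
    (hx : ‖x‖ < 1) : HasDerivAt (fun t => LL k t y) (∑' n, termDeriv k y n x) x := by
  obtain ⟨R, hxR, hR1⟩ := exists_between hx
  have hR0 : 0 ≤ R := (norm_nonneg x).trans hxR.le
  simp only [← (hasDerivAt_term k y _ x).deriv]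
  exact Complex.hasDerivAt_tsum_of_summable_norm
    (summable_pi_prod_geometric hR0 hR1 2 zero_le_two s)
    (fun n t _ => (hasDerivAt_term k y n t).differentiableAt.differentiableWithinAt)
    Metric.isOpen_ball (fun n t ht => norm_term_le k hy n (mem_ball_zero_iff.1 ht).le)
    (mem_ball_zero_iff.2 hxR)

theorem den_eq_den_update_mul_weight {r : ℕ} (k : Fin (r + 1) → ℕ) (hk : 1 ≤ k (Fin.last r))
    (n : Fin (r + 1) → ℕ+) :
    den k n = den (Function.update k (Fin.last r) (k (Fin.last r) - 1)) n * weight n := by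
  simp only [den, Fin.prod_univ_castSucc, Function.update_self,
    Function.update_of_ne (Fin.castSucc_lt_last _).ne, Fin.Iic_last_eq_univ, weight, mul_assoc,
    pow_sub_one_mul (Nat.one_le_iff_ne_zero.1 hk)]

theorem termDeriv_eq_inv_mul_term_update {r : ℕ} (k : Fin (r + 1) → ℕ) (hk : 1 ≤ k (Fin.last r))
    (y : ℂ) (n : Fin (r + 1) → ℕ+) {x : ℂ} (hx : x ≠ 0) :
    termDeriv k y n x =
      1 / x * term (Function.update k (Fin.last r) (k (Fin.last r) - 1)) y n x := by
  have hw : (weight n : ℂ) ≠ 0 := Nat.cast_ne_zero.2 (weight_pos n).ne'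
  rw [termDeriv, term_eq, coeff, coeff, den_eq_den_update_mul_weight k hk,
    ← pow_sub_one_mul (weight_pos n).ne' x]
  have := den_ne_zero (Function.update k (Fin.last r) (k (Fin.last r) - 1)) n
  field_simp

theorem weight_snoc {r : ℕ} (n : Fin r → ℕ+) (m : ℕ+) :
    weight (Fin.snoc n m : Fin (r + 1) → ℕ+) = weight n + m := by
  simp [weight, Fin.sum_univ_castSucc]

theorem den_snoc {r : ℕ} (k : Fin (r + 1) → ℕ) (hk : k (Fin.last r) = 1) (n : Fin r → ℕ+)
    (m : ℕ+) :
    den k (Fin.snoc n m) = den (fun j => k j.castSucc) n * (weight n + m : ℕ) := by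
  rw [← weight_snoc]
  simp [den, Fin.prod_univ_castSucc, Fin.sum_Iic_castSucc, hk, Fin.Iic_last_eq_univ, weight]

theorem termDeriv_snoc {r : ℕ} (k : Fin (r + 1) → ℕ) (hk : k (Fin.last r) = 1) (y : ℂ)
    (n : Fin r → ℕ+) (m : ℕ+) (x : ℂ) :
    termDeriv k y (Fin.snoc n m) x =
      x ^ ((m : ℕ) - 1) * (1 - y ^ (m : ℕ)) * term (fun j => k j.castSucc) y n x := by
  have hw : ((weight n + m : ℕ) : ℂ) ≠ 0 := Nat.cast_ne_zero.2 (by positivity)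
  have := den_ne_zero (fun j => k j.castSucc) n
  rw [termDeriv, term_eq, coeff, coeff, den_snoc k hk, weight_snoc,
    Nat.add_sub_assoc (Nat.one_le_iff_ne_zero.2 m.ne_zero), pow_add]
  simp only [Fin.prod_univ_castSucc, Fin.snoc_castSucc, Fin.snoc_last]
  field_simp

end LL

theorem LL_hasDerivAt_general (r : ℕ) (k : Fin (r + 1) → ℕ)
    (y : ℂ) (hy : ‖y‖ ≤ 1) (x : ℂ) (hx : ‖x‖ < 1) :
    (1 < k (Fin.last r) → x ≠ 0 →
      HasDerivAt (fun t : ℂ => LL k t y)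
        (1 / x * LL (Function.update k (Fin.last r) (k (Fin.last r) - 1)) x y) x) ∧
    (k (Fin.last r) = 1 →
      HasDerivAt (fun t : ℂ => LL k t y)
        ((1 - y) / ((1 - x) * (1 - x * y)) * LL (fun j : Fin r => k j.castSucc) x y) x) := by
  refine ⟨fun hk hx0 => ?_, fun hk => ?_⟩ <;> convert LL.hasDerivAt_tsum_termDeriv k hy hx using 1
  · rw [LL.eq_tsum_term, ← tsum_mul_left]
    exact (tsum_congr fun n => LL.termDeriv_eq_inv_mul_term_update k hk.le y n hx0).symm
  · have hxy : ‖x * y‖ < 1 :=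
      (norm_mul x y).trans_lt (mul_lt_one_of_nonneg_of_lt_one_left (norm_nonneg x) hx hy)
    rw [tsum_eq_tsum_mul_tsum_of_snoc (fun m n => LL.termDeriv_snoc k hk y n m x)
      (summable_norm_pow_pred_mul_one_sub_pow hx hxy) (LL.summable_norm_term _ hy hx),
      (hasSum_pow_pred_mul_one_sub_pow hx hxy).tsum_eq, LL.eq_tsum_term]

theorem LL_hasDerivAt (r : ℕ) (k : Fin (r + 1) → ℕ) (hk : ∀ j, 1 ≤ k j)
    (y : ℂ) (hy : ‖y‖ ≤ 1) (x : ℂ) (hx : ‖x‖ < 1) :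
    (1 < k (Fin.last r) → x ≠ 0 →
      HasDerivAt (fun t : ℂ => LL k t y)
        (1 / x * LL (Function.update k (Fin.last r) (k (Fin.last r) - 1)) x y) x) ∧
    (k (Fin.last r) = 1 →
      HasDerivAt (fun t : ℂ => LL k t y)
        ((1 - y) / ((1 - x) * (1 - x * y)) * LL (fun j : Fin r => k j.castSucc) x y) x) :=
  LL_hasDerivAt_general r k y hy x hx
end

section
/- For a fixed complex $y$ with $|y| \leq 1$, $y \neq 1$, the Möbius-type substitution $x \mapsto \frac{1-x}{1-xy}$ is an involution on its domain, and one has the derivative identity $\frac{\partial}{\partial x} \mathcal{L}_{\underbrace{1,\ldots,1}_{j}}\left(\frac{1-x}{1-xy}, y\right) = -\frac{1}{x} \mathcal{L}_{\underbrace{1,\ldots,1}_{j-1}}\left(\frac{1-x}{1-xy}, y\right)$ for $j \geq 1$ (with $\mathcal{L}_\emptyset = 1$), valid for $x$ with $0 < |x| < 1$ and $|(1-x)/(1-xy)| < 1$. -/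
/-!
Symmetrising over the orderings of the summation indices, the identity
`∑_σ ∏_i 1/(n_{σ 1} + ⋯ + n_{σ i}) = ∏_i 1/n_i` turns `𝓛_{1,…,1}(w, y)` with `j` ones into
`(∑_m w^m (1 - y^m)/m)^j / j! = (log(1 - wy) - log(1 - w))^j / j!`.
Differentiating in `w` lowers `j` by one and produces the factor `1/(1-w) - y/(1-wy)`;
along `w = u(x) = (1-x)/(1-xy)` the chain rule multiplies it by `u'(x) = -(1-y)/(1-xy)²`,
and the product collapses to `-1/x`.
-/

open scoped BigOperators

open Finset Equiv

section PermutationIdentity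

variable {K : Type*} [Field K] [CharZero K]

theorem prod_comp_swap_zero_succ {M : Type*} [CommMonoid M] {n : ℕ} (f : Fin (n + 1) → M)
    (p : Fin (n + 1)) : f p * ∏ j : Fin n, f (swap 0 p j.succ) = ∏ i, f i := by
  rw [← Equiv.prod_comp (swap 0 p) f, Fin.prod_univ_succ, swap_apply_left]

theorem sum_perm_prod_inv_sum_Ici {n : ℕ} (k : Fin n → ℕ+) :
    ∑ σ : Perm (Fin n), ∏ i, ((∑ ν ∈ Ici i, (k (σ ν) : ℕ) : ℕ) : K)⁻¹ =
      ∏ i, ((k i : ℕ) : K)⁻¹ := by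
  induction n with
  | zero => simp
  | succ n ih =>
    set total : K := ((∑ ν, (k ν : ℕ) : ℕ) : K)
    have htotal : total ≠ 0 := by
      have : 0 < ∑ ν, (k ν : ℕ) := sum_pos (fun i _ => (k i).pos) univ_nonempty
      exact Nat.cast_ne_zero.mpr this.ne'
    -- write `σ` as `(σ 0, τ)` via `decomposeFin`; the factor at `i = 0` is the full sum
    have hsplit : ∀ p τ,
        ∏ i, ((∑ ν ∈ Ici i, (k (Perm.decomposeFin.symm (p, τ) ν) : ℕ) : ℕ) : K)⁻¹ =
          total⁻¹ * ∏ i : Fin n, ((∑ ν ∈ Ici i, (k (swap 0 p (τ ν).succ) : ℕ) : ℕ) : K)⁻¹ := by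
      intro p τ
      have hIci : Ici (0 : Fin (n + 1)) = univ := by ext; simp
      rw [Fin.prod_univ_succ, hIci,
        Equiv.sum_comp (Perm.decomposeFin.symm (p, τ)) (fun ν => (k ν : ℕ))]
      congr 1
      refine prod_congr rfl fun i _ => ?_
      rw [← Fin.map_succEmb_Ici, sum_map]
      simp
    have hk : ∀ p, ∏ j : Fin n, ((k (swap 0 p j.succ) : ℕ) : K)⁻¹ =
        (k p : ℕ) * ∏ i, ((k i : ℕ) : K)⁻¹ := by
      intro p
      have hp : ((k p : ℕ) : K) ≠ 0 := by exact_mod_cast (k p).ne_zero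
      rw [← prod_comp_swap_zero_succ (fun i => ((k i : ℕ) : K)⁻¹) p, ← mul_assoc,
        mul_inv_cancel₀ hp, one_mul]
    rw [← Equiv.sum_comp Perm.decomposeFin.symm, Fintype.sum_prod_type]
    simp only [hsplit, ← mul_sum]
    rw [sum_congr rfl fun p _ => ih fun j => k (swap 0 p j.succ)]
    simp only [hk, ← sum_mul]
    rw [← Nat.cast_sum, inv_mul_cancel_left₀ htotal]

theorem sum_perm_prod_inv_sum_Iic {n : ℕ} (k : Fin n → ℕ+) :
    ∑ σ : Perm (Fin n), ∏ i, ((∑ ν ∈ Iic i, (k (σ ν) : ℕ) : ℕ) : K)⁻¹ =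
      ∏ i, ((k i : ℕ) : K)⁻¹ := by
  rw [← sum_perm_prod_inv_sum_Ici k, ← Equiv.sum_comp (Equiv.mulRight Fin.revPerm)]
  refine sum_congr rfl fun σ _ => ?_
  rw [← Equiv.prod_comp Fin.revPerm]
  refine prod_congr rfl fun i _ => ?_
  rw [Fin.revPerm_apply, ← Fin.map_revPerm_Ici, sum_map]
  simp

end PermutationIdentity

section PiProduct

variable {𝕜 ι : Type*} [NormedField 𝕜] {f : ι → 𝕜}

theorem summable_norm_prod_pi (hf : Summable (‖f ·‖)) (j : ℕ) :
    Summable fun n : Fin j → ι => ‖∏ i, f (n i)‖ := by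
  induction j with
  | zero => exact .of_finite
  | succ j ih =>
    refine (Fin.consEquiv fun _ => ι).summable_iff.mp ?_
    refine (hf.mul_of_nonneg ih (fun _ => norm_nonneg _) fun _ => norm_nonneg _).congr fun n => ?_
    simp [Fin.consEquiv, Fin.prod_univ_succ]

theorem tsum_prod_pi [CompleteSpace 𝕜] (hf : Summable (‖f ·‖)) (j : ℕ) :
    ∑' n : Fin j → ι, ∏ i, f (n i) = (∑' n, f n) ^ j := by
  induction j with
  | zero => simp
  | succ j ih =>
    rw [pow_succ', ← ih, tsum_mul_tsum_of_summable_norm hf (summable_norm_prod_pi hf j),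
      ← (Fin.consEquiv fun _ => ι).tsum_eq]
    refine tsum_congr fun n => ?_
    simp [Fin.consEquiv, Fin.prod_univ_succ]

end PiProduct

section Symmetrization

theorem Complex.norm_natCast_inv_le_one (n : ℕ) : ‖((n : ℂ))⁻¹‖ ≤ 1 := by
  rcases n.eq_zero_or_pos with rfl | hn
  · simp
  · rw [norm_inv, Complex.norm_natCast]
    exact inv_le_one_of_one_le₀ (by exact_mod_cast hn)

open Nat in
theorem tsum_prod_div_prod_sum_Iic (a : ℕ+ → ℂ) (ha : Summable (‖a ·‖)) (j : ℕ) :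
    ∑' n : Fin j → ℕ+, (∏ i, a (n i)) / ∏ i, ((∑ ν ∈ Iic i, (n ν : ℕ) : ℕ) : ℂ) =
      (∑' m : ℕ+, a m / (m : ℕ)) ^ j / j ! := by
  set F : Perm (Fin j) → (Fin j → ℕ+) → ℂ := fun σ n =>
    (∏ i, a (n i)) * ∏ i, ((∑ ν ∈ Iic i, (n (σ ν) : ℕ) : ℕ) : ℂ)⁻¹
  have hF_summable : ∀ σ, Summable (F σ) := by
    refine fun σ => .of_norm_bounded (summable_norm_prod_pi ha j) fun n => ?_
    rw [norm_mul]
    refine mul_le_of_le_one_right (norm_nonneg _) ?_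
    rw [norm_prod]
    exact prod_le_one (fun _ _ => norm_nonneg _) fun _ _ => Complex.norm_natCast_inv_le_one _
  have hF_perm : ∀ σ, ∑' n, F σ n = ∑' n, F 1 n := by
    intro σ
    rw [← (Equiv.arrowCongr σ.symm (Equiv.refl ℕ+)).tsum_eq (F 1)]
    refine tsum_congr fun n => ?_
    simp [F, Equiv.prod_comp σ (fun i => a (n i))]
  have ha_div : Summable fun m : ℕ+ => ‖a m / (m : ℕ)‖ := by
    refine .of_nonneg_of_le (fun _ => norm_nonneg _) (fun m => ?_) ha
    rw [div_eq_mul_inv, norm_mul]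
    exact mul_le_of_le_one_right (norm_nonneg _) (Complex.norm_natCast_inv_le_one _)
  rw [eq_div_iff (Nat.cast_ne_zero.mpr j.factorial_ne_zero), ← tsum_prod_pi ha_div]
  calc (∑' n : Fin j → ℕ+, (∏ i, a (n i)) / ∏ i, ((∑ ν ∈ Iic i, (n ν : ℕ) : ℕ) : ℂ)) * j !
      = ∑ σ : Perm (Fin j), ∑' n, F σ n := by
        rw [sum_congr rfl fun σ _ => hF_perm σ, sum_const, Finset.card_univ, Fintype.card_perm,
          Fintype.card_fin, nsmul_eq_mul, mul_comm]
        congr 1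
        refine tsum_congr fun n => ?_
        simp [F, div_eq_mul_inv]
    _ = ∑' n, ∑ σ, F σ n := (Summable.tsum_finsetSum fun σ _ => hF_summable σ).symm
    _ = ∑' n : Fin j → ℕ+, ∏ i, a (n i) / (n i : ℕ) := by
        refine tsum_congr fun n => ?_
        simp only [F, ← mul_sum, sum_perm_prod_inv_sum_Iic, div_eq_mul_inv, prod_mul_distrib]

end Symmetrization

section Polylogarithm

open Complex Nat

variable {w y : ℂ}

theorem norm_mul_lt_one_of_lt_of_le (hw : ‖w‖ < 1) (hy : ‖y‖ ≤ 1) : ‖w * y‖ < 1 := by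
  rw [norm_mul]
  exact mul_lt_one_of_nonneg_of_lt_one_left (norm_nonneg w) hw hy

theorem Complex.one_sub_mem_slitPlane (hw : ‖w‖ < 1) : 1 - w ∈ slitPlane := by
  simpa [sub_eq_add_neg] using mem_slitPlane_of_norm_lt_one (z := -w) (by simpa)

theorem hasSum_pow_mul_one_sub_pow_div (hw : ‖w‖ < 1) (hy : ‖y‖ ≤ 1) :
    HasSum (fun m : ℕ+ => w ^ (m : ℕ) * (1 - y ^ (m : ℕ)) / (m : ℕ))
      (log (1 - w * y) - log (1 - w)) := by
  refine (hasSum_pnat_iff (f := fun m : ℕ => w ^ m * (1 - y ^ m) / m)).mpr ?_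
  simp only [pow_zero, sub_self, mul_zero, Nat.cast_zero, div_zero, add_zero]
  convert (hasSum_taylorSeries_neg_log hw).sub
    (hasSum_taylorSeries_neg_log (norm_mul_lt_one_of_lt_of_le hw hy)) using 1
  · ext m
    ring
  · ring

theorem summable_norm_pow_mul_one_sub_pow (hw : ‖w‖ < 1) (hy : ‖y‖ ≤ 1) :
    Summable fun m : ℕ+ => ‖w ^ (m : ℕ) * (1 - y ^ (m : ℕ))‖ := by
  refine .of_nonneg_of_le (fun _ => norm_nonneg _) (fun m => ?_)
    (((summable_geometric_of_lt_one (norm_nonneg w) hw).mul_left 2).comp_injective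
      PNat.coe_injective)
  have h2 : ‖1 - y ^ (m : ℕ)‖ ≤ 2 := calc
    ‖1 - y ^ (m : ℕ)‖ ≤ 1 + ‖y‖ ^ (m : ℕ) := by simpa using norm_sub_le (1 : ℂ) (y ^ (m : ℕ))
    _ ≤ 2 := by linarith [pow_le_one₀ (norm_nonneg y) hy (n := m)]
  rw [norm_mul, norm_pow, mul_comm]
  exact mul_le_mul_of_nonneg_right h2 (by positivity)

theorem LL_one_eq (hw : ‖w‖ < 1) (hy : ‖y‖ ≤ 1) (j : ℕ) :
    LL (fun _ : Fin j => 1) w y = (log (1 - w * y) - log (1 - w)) ^ j / j ! := by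
  simp only [LL, pow_one]
  rw [tsum_prod_div_prod_sum_Iic _ (summable_norm_pow_mul_one_sub_pow hw hy),
    (hasSum_pow_mul_one_sub_pow_div hw hy).tsum_eq]

theorem hasDerivAt_log_one_sub_mul_sub_log_one_sub (hw : ‖w‖ < 1) (hy : ‖y‖ ≤ 1) :
    HasDerivAt (fun v => log (1 - v * y) - log (1 - v)) (1 / (1 - w) - y / (1 - w * y)) w := by
  have hwy := ((hasDerivAt_id w).mul_const y).const_sub 1 |>.clog
    (one_sub_mem_slitPlane (norm_mul_lt_one_of_lt_of_le hw hy))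
  have hw := ((hasDerivAt_id w).const_sub 1).clog (one_sub_mem_slitPlane hw)
  refine (hwy.sub hw).congr_deriv ?_
  simp only [id_eq]
  ring

theorem hasDerivAt_LL_one_succ (hw : ‖w‖ < 1) (hy : ‖y‖ ≤ 1) (j : ℕ) :
    HasDerivAt (fun v => LL (fun _ : Fin (j + 1) => 1) v y)
      (LL (fun _ : Fin j => 1) w y * (1 / (1 - w) - y / (1 - w * y))) w := by
  have hLL : (fun v => LL (fun _ : Fin (j + 1) => 1) v y) =ᶠ[nhds w]
      fun v => (log (1 - v * y) - log (1 - v)) ^ (j + 1) / (j + 1) ! :=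
    (isOpen_lt continuous_norm continuous_const).eventually_mem (s := {v : ℂ | ‖v‖ < 1}) hw
      |>.mono fun v hv => LL_one_eq hv hy (j + 1)
  rw [hLL.hasDerivAt_iff, LL_one_eq hw hy]
  refine (((hasDerivAt_log_one_sub_mul_sub_log_one_sub hw hy).pow (j + 1)).div_const
    ((j + 1) ! : ℂ)).congr_deriv ?_
  rw [Nat.add_sub_cancel, Nat.factorial_succ, Nat.cast_mul]
  field_simp

end Polylogarithm

section Mobius

variable {K : Type*} [Field K] {x y : K}

theorem one_sub_div_one_sub_mul (hxy : x * y ≠ 1) :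
    1 - (1 - x) / (1 - x * y) = x * (1 - y) / (1 - x * y) := by
  field_simp
  ring

theorem one_sub_div_one_sub_mul_mul (hxy : x * y ≠ 1) :
    1 - (1 - x) / (1 - x * y) * y = (1 - y) / (1 - x * y) := by
  field_simp
  ring

theorem mobius_mobius (hy : y ≠ 1) (hxy : x * y ≠ 1) :
    (1 - (1 - x) / (1 - x * y)) / (1 - (1 - x) / (1 - x * y) * y) = x := by
  rw [one_sub_div_one_sub_mul hxy, one_sub_div_one_sub_mul_mul hxy]
  field_simp

-- With `u = (1-x)/(1-xy)`: `1/(1-u) - y/(1-uy) = (1-y)/((1-u)(1-uy))` and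
-- `(1-u)(1-uy) = x(1-y)²/(1-xy)²`, so the `(1-y)` and `(1-xy)` factors cancel against `u'(x)`.
theorem mobius_deriv_mul (hx : x ≠ 0) (hy : y ≠ 1) (hxy : x * y ≠ 1) :
    (1 / (1 - (1 - x) / (1 - x * y)) - y / (1 - (1 - x) / (1 - x * y) * y)) *
      (-(1 - y) / (1 - x * y) ^ 2) = -(1 / x) := by
  rw [one_sub_div_one_sub_mul hxy, one_sub_div_one_sub_mul_mul hxy]
  field_simp

theorem hasDerivAt_mobius {𝕜 : Type*} [NontriviallyNormedField 𝕜] {x y : 𝕜} (hxy : x * y ≠ 1) :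
    HasDerivAt (fun t => (1 - t) / (1 - t * y)) (-(1 - y) / (1 - x * y) ^ 2) x := by
  have hxy' : 1 - x * y ≠ 0 := sub_ne_zero.mpr hxy.symm
  refine (((hasDerivAt_id x).const_sub 1).div
    (((hasDerivAt_id x).mul_const y).const_sub 1) hxy').congr_deriv ?_
  simp only [id_eq]
  field_simp
  ring

end Mobius

theorem mobius_involution_and_deriv (y : ℂ) (hy : ‖y‖ ≤ 1) (hy1 : y ≠ 1) :
    (∀ x : ℂ, x * y ≠ 1 →
      (1 - (1 - x) / (1 - x * y)) / (1 - (1 - x) / (1 - x * y) * y) = x) ∧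
    (∀ j : ℕ, 1 ≤ j → ∀ x : ℂ, 0 < ‖x‖ → ‖x‖ < 1 → ‖(1 - x) / (1 - x * y)‖ < 1 →
      HasDerivAt (fun t : ℂ => LL (fun _ : Fin j => 1) ((1 - t) / (1 - t * y)) y)
        (-(1 / x) * LL (fun _ : Fin (j - 1) => 1) ((1 - x) / (1 - x * y)) y) x) := by
  refine ⟨fun x hxy => mobius_mobius hy1 hxy, fun j hj x hx0 hx1 hu => ?_⟩
  obtain ⟨j, rfl⟩ := Nat.exists_eq_add_of_le' hj
  have hxy : x * y ≠ 1 := fun h => by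
    simpa [h] using norm_mul_lt_one_of_lt_of_le hx1 hy
  refine ((hasDerivAt_LL_one_succ hu hy j).comp x (hasDerivAt_mobius hxy)).congr_deriv ?_
  rw [Nat.add_sub_cancel, mul_assoc, mobius_deriv_mul (norm_pos_iff.mp hx0) hy1 hxy, mul_comm]
end

section
/- (Five-term relation for the dilogarithm.) For real $x, y$ with $0 < x < 1$ and $0 < y < 1$: $\mathrm{Li}_2(x) + \mathrm{Li}_2(y) + \mathrm{Li}_2(1-xy) + \mathrm{Li}_2\left(\frac{1-x}{1-xy}\right) + \mathrm{Li}_2\left(\frac{1-y}{1-xy}\right) = 3\zeta(2) - \log x \log(1-x) - \log y \log(1-y) - \log\left(\frac{1-x}{1-xy}\right)\log\left(\frac{1-y}{1-xy}\right)$. -/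
/-!
Fix `y` and regard both sides as functions of `x ∈ (0, 1)`. Since `Li₂'(z) = -log (1 - z) / z`,
the derivative of their difference vanishes identically, so the difference is constant, and its
value is read off in the limit `x → 0⁺`, where the arguments of `Li₂` tend to `0, y, 1, 1, 1 - y`:
there `Li₂(1) = ζ(2)`, `log x · log (1 - x) → 0`, and the reflection formula, proved by the same
method, finishes the computation.
-/

/-- The real dilogarithm `Li₂(z) = ∑_{n ≥ 1} z^n / n²`. -/
noncomputable def dilog (z : ℝ) : ℝ := ∑' n : ℕ, z ^ (n + 1) / ((n + 1 : ℕ) : ℝ) ^ 2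

open Real Set Filter Topology

lemma dilog_zero : dilog 0 = 0 := by
  simp [dilog]

lemma dilog_one : dilog 1 = π ^ 2 / 6 := by
  have h := (hasSum_nat_add_iff' 1).mpr hasSum_zeta_two
  simpa [dilog] using h.tsum_eq

lemma continuousOn_dilog : ContinuousOn dilog (Icc (-1) 1) := by
  refine continuousOn_tsum (u := fun n : ℕ => 1 / ((n + 1 : ℕ) : ℝ) ^ 2)
    (fun n => (continuous_pow _).continuousOn.div_const _) ?_ fun n z hz => ?_
  · exact_mod_cast (summable_nat_add_iff 1).mpr (summable_one_div_nat_pow.mpr one_lt_two)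
  · simp only [norm_div, norm_pow, Real.norm_natCast]
    gcongr
    exact pow_le_one₀ (norm_nonneg z) (abs_le.2 hz)

lemma Filter.Tendsto.dilog {α : Type*} {l : Filter α} {f : α → ℝ} {c : ℝ}
    (hf : Tendsto f l (𝓝 c)) (hc : c ∈ Icc (-1) 1) (hmem : ∀ᶠ a in l, f a ∈ Icc (-1) 1) :
    Tendsto (fun a => _root_.dilog (f a)) l (𝓝 (_root_.dilog c)) :=
  (continuousOn_dilog c hc).tendsto.comp (tendsto_nhdsWithin_iff.mpr ⟨hf, hmem⟩)

lemma hasDerivAt_dilog_of_abs_lt_one {z : ℝ} (hz : |z| < 1) :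
    HasDerivAt dilog (∑' n : ℕ, z ^ n / ((n + 1 : ℕ) : ℝ)) z := by
  obtain ⟨r, hzr, hr1⟩ := exists_between hz
  have hr0 : 0 < r := (abs_nonneg z).trans_lt hzr
  unfold dilog
  refine hasDerivAt_tsum_of_isPreconnected (u := fun n => r ^ n) (t := Ioo (-r) r) (y₀ := 0)
    (g' := fun n w => w ^ n / ((n + 1 : ℕ) : ℝ))
    (summable_geometric_of_lt_one hr0.le hr1) isOpen_Ioo isPreconnected_Ioo
    (fun n w _ => ?_) (fun n w hw => ?_) ⟨neg_lt_zero.2 hr0, hr0⟩ (by simp) (abs_lt.1 hzr)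
  · refine ((hasDerivAt_pow (n + 1) w).div_const (((n + 1 : ℕ) : ℝ) ^ 2)).congr_deriv ?_
    rw [Nat.add_sub_cancel]
    field_simp
  · simp only [norm_div, norm_pow, Real.norm_natCast]
    calc ‖w‖ ^ n / ((n + 1 : ℕ) : ℝ) ≤ ‖w‖ ^ n := div_le_self (by positivity) (by simp)
      _ ≤ r ^ n := pow_le_pow_left₀ (norm_nonneg w) (abs_lt.2 hw).le n

lemma hasSum_pow_div_succ {z : ℝ} (hz0 : z ≠ 0) (hz : |z| < 1) :
    HasSum (fun n : ℕ => z ^ n / ((n + 1 : ℕ) : ℝ)) (-log (1 - z) / z) := by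
  refine ((hasSum_pow_div_log_of_abs_lt_one hz).div_const z).congr_fun fun n => ?_
  push_cast
  field_simp
  ring

lemma hasDerivAt_dilog {z : ℝ} (hz0 : z ≠ 0) (hz : |z| < 1) :
    HasDerivAt dilog (-log (1 - z) / z) z :=
  (hasSum_pow_div_succ hz0 hz).tsum_eq ▸ hasDerivAt_dilog_of_abs_lt_one hz

lemma HasDerivAt.dilog {f : ℝ → ℝ} {f' x : ℝ} (hf : HasDerivAt f f' x) (h0 : f x ≠ 0)
    (h1 : |f x| < 1) :
    HasDerivAt (fun t => _root_.dilog (f t)) (-Real.log (1 - f x) / f x * f') x :=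
  (hasDerivAt_dilog h0 h1).comp x hf

lemma eq_of_hasDerivAt_zero_of_tendsto_nhdsGT {f : ℝ → ℝ} {a b c : ℝ}
    (hf : ∀ t ∈ Ioo a b, HasDerivAt f 0 t) (hlim : Tendsto f (𝓝[>] a) (𝓝 c)) {x : ℝ}
    (hx : x ∈ Ioo a b) : f x = c := by
  have hconst : ∀ t ∈ Ioo a b, f t = f x := fun t ht =>
    isOpen_Ioo.is_const_of_deriv_eq_zero isPreconnected_Ioo
      (fun s hs => (hf s hs).differentiableAt.differentiableWithinAt)
      (fun s hs => (hf s hs).deriv) ht hx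
  refine tendsto_nhds_unique (tendsto_const_nhds.congr' ?_) hlim
  filter_upwards [Ioo_mem_nhdsGT (hx.1.trans hx.2)] with t ht using (hconst t ht).symm

lemma tendsto_log_mul_log_one_sub_nhdsGT_zero :
    Tendsto (fun x => log x * log (1 - x)) (𝓝[>] 0) (𝓝 0) := by
  have hslope : Tendsto (fun x => log (1 - x) / x) (𝓝[>] 0) (𝓝 (-1)) := by
    have h := ((hasDerivAt_id (0 : ℝ)).const_sub 1).log (by norm_num)
    convert h.tendsto_slope_zero_right using 2 <;> simp [div_eq_inv_mul]
  have hmul : Tendsto (fun x => x * log x) (𝓝[>] 0) (𝓝 0) := by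
    simpa using continuous_mul_log.continuousAt.tendsto.mono_left (nhdsWithin_le_nhds (a := 0))
  have h := hmul.mul hslope
  rw [zero_mul] at h
  refine h.congr' ?_
  filter_upwards [self_mem_nhdsWithin] with x hx
  field_simp [(mem_Ioi.1 hx).ne']

lemma abs_lt_one_of_mem_Ioo {z : ℝ} (hz : z ∈ Ioo (0 : ℝ) 1) : |z| < 1 :=
  abs_lt.2 ⟨by linarith [hz.1], hz.2⟩

lemma Ioo_zero_one_subset_Icc : Ioo (0 : ℝ) 1 ⊆ Icc (-1) 1 :=
  fun _ hz => ⟨by linarith [hz.1], hz.2.le⟩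

lemma one_sub_mem_Ioo {z : ℝ} (hz : z ∈ Ioo (0 : ℝ) 1) : 1 - z ∈ Ioo (0 : ℝ) 1 :=
  ⟨sub_pos.2 hz.2, by linarith [hz.1]⟩

lemma dilog_add_dilog_one_sub {z : ℝ} (hz : z ∈ Ioo (0 : ℝ) 1) :
    dilog z + dilog (1 - z) = π ^ 2 / 6 - log z * log (1 - z) := by
  have hderiv : ∀ t ∈ Ioo (0 : ℝ) 1,
      HasDerivAt (fun t => dilog t + dilog (1 - t) + log t * log (1 - t)) 0 t := by
    intro t ht
    have hsub : HasDerivAt (fun t => 1 - t) (-1) t := by simpa using (hasDerivAt_id t).const_sub 1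
    have h1t := one_sub_mem_Ioo ht
    have h := ((hasDerivAt_dilog ht.1.ne' (abs_lt_one_of_mem_Ioo ht)).add
      (hsub.dilog h1t.1.ne' (abs_lt_one_of_mem_Ioo h1t))).add
      ((hasDerivAt_log ht.1.ne').mul (hsub.log h1t.1.ne'))
    refine h.congr_deriv ?_
    rw [sub_sub_cancel]
    field_simp [h1t.1.ne']
    ring
  have hlim : Tendsto (fun t => dilog t + dilog (1 - t) + log t * log (1 - t)) (𝓝[>] 0)
      (𝓝 (π ^ 2 / 6)) := by
    have hmem : ∀ᶠ t in 𝓝[>] (0 : ℝ), t ∈ Ioo (0 : ℝ) 1 := Ioo_mem_nhdsGT one_pos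
    have hsub : Tendsto (fun t : ℝ => 1 - t) (𝓝[>] 0) (𝓝 1) := by
      have : ContinuousAt (fun t : ℝ => 1 - t) 0 := by fun_prop
      simpa using this.tendsto.mono_left nhdsWithin_le_nhds
    have l0 : Tendsto dilog (𝓝[>] 0) (𝓝 (dilog 0)) :=
      (tendsto_id.mono_left nhdsWithin_le_nhds).dilog (by norm_num)
        (hmem.mono fun t ht => Ioo_zero_one_subset_Icc ht)
    have l1 := hsub.dilog (by norm_num)
      (hmem.mono fun t ht => Ioo_zero_one_subset_Icc (one_sub_mem_Ioo ht))
    simpa [dilog_zero, dilog_one] using (l0.add l1).add tendsto_log_mul_log_one_sub_nhdsGT_zero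
  linarith [eq_of_hasDerivAt_zero_of_tendsto_nhdsGT hderiv hlim hz]

lemma one_sub_mul_mem_Ioo {x y : ℝ} (hx : x ∈ Ioo (0 : ℝ) 1) (hy : y ∈ Ioo (0 : ℝ) 1) :
    1 - x * y ∈ Ioo (0 : ℝ) 1 := by
  obtain ⟨hx0, hx1⟩ := hx
  obtain ⟨hy0, hy1⟩ := hy
  constructor <;> nlinarith

lemma one_sub_div_one_sub_mul_mem_Ioo {x y : ℝ} (hx : x ∈ Ioo (0 : ℝ) 1)
    (hy : y ∈ Ioo (0 : ℝ) 1) : (1 - x) / (1 - x * y) ∈ Ioo (0 : ℝ) 1 := by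
  have hu := (one_sub_mul_mem_Ioo hx hy).1
  obtain ⟨hx0, hx1⟩ := hx
  exact ⟨div_pos (sub_pos.2 hx1) hu, (div_lt_one hu).2 (by nlinarith [hy.2])⟩

noncomputable def fiveTermSum (x y : ℝ) : ℝ :=
  dilog x + dilog y + dilog (1 - x * y) + dilog ((1 - x) / (1 - x * y)) +
    dilog ((1 - y) / (1 - x * y)) + log x * log (1 - x) + log y * log (1 - y) +
    log ((1 - x) / (1 - x * y)) * log ((1 - y) / (1 - x * y))

lemma hasDerivAt_fiveTermSum {x y : ℝ} (hx : x ∈ Ioo (0 : ℝ) 1) (hy : y ∈ Ioo (0 : ℝ) 1) :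
    HasDerivAt (fun t => fiveTermSum t y) 0 x := by
  have h1x := one_sub_mem_Ioo hx
  have hu := one_sub_mul_mem_Ioo hx hy
  have ha := one_sub_div_one_sub_mul_mem_Ioo hx hy
  have hb : (1 - y) / (1 - x * y) ∈ Ioo (0 : ℝ) 1 :=
    mul_comm y x ▸ one_sub_div_one_sub_mul_mem_Ioo hy hx
  have dsub : HasDerivAt (fun t => 1 - t) (-1) x := by simpa using (hasDerivAt_id x).const_sub 1
  have du : HasDerivAt (fun t => 1 - t * y) (-y) x := by
    simpa using ((hasDerivAt_id x).mul_const y).const_sub 1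
  have da : HasDerivAt (fun t => (1 - t) / (1 - t * y)) (-(1 - y) / (1 - x * y) ^ 2) x :=
    (dsub.div du hu.1.ne').congr_deriv (by ring)
  have db : HasDerivAt (fun t => (1 - y) / (1 - t * y)) (y * (1 - y) / (1 - x * y) ^ 2) x :=
    ((hasDerivAt_const x (1 - y)).div du hu.1.ne').congr_deriv (by ring)
  have h := (((((((hasDerivAt_dilog hx.1.ne' (abs_lt_one_of_mem_Ioo hx)).add_const (dilog y)).add
    (du.dilog hu.1.ne' (abs_lt_one_of_mem_Ioo hu))).add
    (da.dilog ha.1.ne' (abs_lt_one_of_mem_Ioo ha))).add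
    (db.dilog hb.1.ne' (abs_lt_one_of_mem_Ioo hb))).add
    ((hasDerivAt_log hx.1.ne').mul (dsub.log h1x.1.ne'))).add_const (log y * log (1 - y))).add
    ((da.log ha.1.ne').mul (db.log hb.1.ne'))
  refine h.congr_deriv ?_
  have hy1 : 1 - y ≠ 0 := (sub_pos.2 hy.2).ne'
  have hu0 := hu.1.ne'
  have e1 : 1 - (1 - x * y) = x * y := by ring
  have e2 : 1 - (1 - x) / (1 - x * y) = x * (1 - y) / (1 - x * y) := by field_simp; ring
  have e3 : 1 - (1 - y) / (1 - x * y) = y * (1 - x) / (1 - x * y) := by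
    rw [eq_div_iff hu0, sub_mul, div_mul_cancel₀ _ hu0]; ring
  rw [e1, e2, e3, log_mul hx.1.ne' hy.1.ne', log_div (mul_ne_zero hx.1.ne' hy1) hu0,
    log_mul hx.1.ne' hy1, log_div (mul_ne_zero hy.1.ne' h1x.1.ne') hu0,
    log_mul hy.1.ne' h1x.1.ne', log_div h1x.1.ne' hu0, log_div hy1 hu0]
  field_simp [hx.1.ne', h1x.1.ne', hy.1.ne']
  ring

lemma tendsto_fiveTermSum_nhdsGT_zero {y : ℝ} (hy : y ∈ Ioo (0 : ℝ) 1) :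
    Tendsto (fun x => fiveTermSum x y) (𝓝[>] 0) (𝓝 (3 * (π ^ 2 / 6))) := by
  have hmem : ∀ᶠ t in 𝓝[>] (0 : ℝ), t ∈ Ioo (0 : ℝ) 1 := Ioo_mem_nhdsGT one_pos
  have hIcc {f : ℝ → ℝ} (hf : ∀ t ∈ Ioo (0 : ℝ) 1, f t ∈ Ioo (0 : ℝ) 1) :
      ∀ᶠ t in 𝓝[>] (0 : ℝ), f t ∈ Icc (-1) 1 :=
    hmem.mono fun t ht => Ioo_zero_one_subset_Icc (hf t ht)
  have cu : ContinuousAt (fun t => 1 - t * y) 0 := by fun_prop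
  have ca : ContinuousAt (fun t => (1 - t) / (1 - t * y)) 0 := .div (by fun_prop) cu (by simp)
  have cb : ContinuousAt (fun t => (1 - y) / (1 - t * y)) 0 := .div (by fun_prop) cu (by simp)
  have lu := cu.tendsto.mono_left (nhdsWithin_le_nhds (s := Ioi 0))
  have la := ca.tendsto.mono_left (nhdsWithin_le_nhds (s := Ioi 0))
  have lb := cb.tendsto.mono_left (nhdsWithin_le_nhds (s := Ioi 0))
  simp only [zero_mul, sub_zero, div_one] at lu la lb
  have l0 : Tendsto dilog (𝓝[>] 0) (𝓝 (dilog 0)) :=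
    (tendsto_id.mono_left nhdsWithin_le_nhds).dilog (by norm_num) (hIcc fun t ht => ht)
  have l1 := lu.dilog (by norm_num) (hIcc fun t ht => one_sub_mul_mem_Ioo ht hy)
  have l2 := la.dilog (by norm_num) (hIcc fun t ht => one_sub_div_one_sub_mul_mem_Ioo ht hy)
  have l3 := lb.dilog (Ioo_zero_one_subset_Icc (one_sub_mem_Ioo hy))
    (hIcc fun t ht => mul_comm y t ▸ one_sub_div_one_sub_mul_mem_Ioo hy ht)
  have l4 := (la.log one_ne_zero).mul (lb.log (sub_pos.2 hy.2).ne')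
  have h := ((((((l0.add_const (dilog y)).add l1).add l2).add l3).add
    tendsto_log_mul_log_one_sub_nhdsGT_zero).add_const (log y * log (1 - y))).add l4
  unfold fiveTermSum
  convert h using 2
  rw [dilog_zero, dilog_one, log_one]
  linarith [dilog_add_dilog_one_sub hy]

theorem five_term_relation (x y : ℝ) (hx0 : 0 < x) (hx1 : x < 1) (hy0 : 0 < y) (hy1 : y < 1) :
    dilog x + dilog y + dilog (1 - x * y) + dilog ((1 - x) / (1 - x * y)) +
        dilog ((1 - y) / (1 - x * y)) =
      3 * (Real.pi ^ 2 / 6) - Real.log x * Real.log (1 - x) -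
        Real.log y * Real.log (1 - y) -
        Real.log ((1 - x) / (1 - x * y)) * Real.log ((1 - y) / (1 - x * y)) := by
  have hy : y ∈ Ioo (0 : ℝ) 1 := ⟨hy0, hy1⟩
  have h := eq_of_hasDerivAt_zero_of_tendsto_nhdsGT (fun t ht => hasDerivAt_fiveTermSum ht hy)
    (tendsto_fiveTermSum_nhdsGT_zero hy) ⟨hx0, hx1⟩
  rw [fiveTermSum] at h
  linarith
end
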